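/- Let x,x' ∈ ℝ^d with h = x−x', let v ∈ ℝ^d be a unit vector, and let φ be uniformly distributed on [0,2π]. Define g(z) = (1−α)z + λ·cos(ω⟨z,v⟩+φ)·v for parameters α ∈ (0,1), λ>0, ω>0, and set δ = ω⟨h,v⟩. Then E_φ[‖g(x)−g(x')‖²] = (1−α)²‖h‖² + 2λ²·sin²(δ/2). -/

import Mathlib

/-!
Writing `a = ω⟪x, v⟫` and `b = ω⟪x', v⟫`, the identity
`cos (a + φ) - cos (b + φ) = -2 sin (δ / 2) sin (φ + (a + b) / 2)` turns `g x φ - g x' φ` into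
`(1 - α) h + K sin (φ + c) v` with `K = -2 λ sin (δ / 2)` and `c = (a + b) / 2`. Its squared norm is a quadratic
polynomial in `sin (φ + c)`; over a full period the linear term averages to `0` and the square
to `1 / 2`, leaving `(1 - α)² ‖h‖² + K² / 2`.
-/

open Real

lemma cos_add_sub_cos_add (a b φ : ℝ) :
    cos (a + φ) - cos (b + φ) = -2 * sin ((a - b) / 2) * sin (φ + (a + b) / 2) := by
  rw [cos_sub_cos]
  ring_nf

lemma norm_smul_add_smul_sq_of_norm_eq_one {E : Type*} [NormedAddCommGroup E]
    [InnerProductSpace ℝ E] {v : E} (hv : ‖v‖ = 1) (a t : ℝ) (h : E) :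
    ‖a • h + t • v‖ ^ 2 = a ^ 2 * ‖h‖ ^ 2 + 2 * a * inner ℝ h v * t + t ^ 2 := by
  simp only [norm_add_sq_real, norm_smul, real_inner_smul_left, real_inner_smul_right, hv,
    mul_pow, Real.norm_eq_abs, sq_abs]
  ring

lemma integral_sin_add_two_pi (c : ℝ) : ∫ φ in (0:ℝ)..(2 * π), sin (φ + c) = 0 := by
  rw [intervalIntegral.integral_comp_add_right sin, integral_sin, zero_add, add_comm,
    cos_add_two_pi, sub_self]

lemma integral_sin_add_sq_two_pi (c : ℝ) : ∫ φ in (0:ℝ)..(2 * π), sin (φ + c) ^ 2 = π := by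
  rw [intervalIntegral.integral_comp_add_right (fun t => sin t ^ 2), integral_sin_sq, zero_add,
    add_comm (2 * π), sin_add_two_pi, cos_add_two_pi]
  ring

lemma integral_quadratic_sin_add_two_pi (A B C c : ℝ) :
    ∫ φ in (0:ℝ)..(2 * π), (A + B * sin (φ + c) + C * sin (φ + c) ^ 2) = 2 * π * A + π * C := by
  rw [intervalIntegral.integral_add, intervalIntegral.integral_add,
    intervalIntegral.integral_const, intervalIntegral.integral_const_mul,
    intervalIntegral.integral_const_mul, integral_sin_add_two_pi, integral_sin_add_sq_two_pi]
  · simp only [sub_zero, smul_eq_mul, mul_zero, add_zero]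
    ring
  all_goals exact Continuous.intervalIntegrable (by fun_prop) _ _

theorem expected_expansion_single_vector_general
    {d : ℕ} (α lam ω : ℝ)
    (v : EuclideanSpace ℝ (Fin d)) (hv : ‖v‖ = 1)
    (x x' : EuclideanSpace ℝ (Fin d)) (h : EuclideanSpace ℝ (Fin d)) (hh : h = x - x')
    (δ : ℝ) (hδ : δ = ω * (inner ℝ h v : ℝ))
    (g : EuclideanSpace ℝ (Fin d) → ℝ → EuclideanSpace ℝ (Fin d))
    (hg : ∀ z φ, g z φ = (1 - α) • z + (lam * Real.cos (ω * (inner ℝ z v : ℝ) + φ)) • v) :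
    (2 * π)⁻¹ * ∫ φ in (0:ℝ)..(2 * π), ‖g x φ - g x' φ‖ ^ 2
      = (1 - α) ^ 2 * ‖h‖ ^ 2 + 2 * lam ^ 2 * Real.sin (δ / 2) ^ 2 := by
  set a := ω * inner ℝ x v
  set b := ω * inner ℝ x' v
  have hδ' : δ = a - b := by rw [hδ, hh, inner_sub_left, mul_sub]
  set K := -2 * lam * sin (δ / 2)
  set c := (a + b) / 2
  have hdiff : ∀ φ, g x φ - g x' φ = (1 - α) • h + (K * sin (φ + c)) • v := by
    intro φ
    have hcos : lam * cos (a + φ) - lam * cos (b + φ) = K * sin (φ + c) := by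
      rw [← mul_sub, cos_add_sub_cos_add, ← hδ']
      ring
    rw [hg, hg, hh, ← hcos]
    module
  have hnorm : ∀ φ, ‖g x φ - g x' φ‖ ^ 2 = (1 - α) ^ 2 * ‖h‖ ^ 2
      + 2 * (1 - α) * inner ℝ h v * K * sin (φ + c) + K ^ 2 * sin (φ + c) ^ 2 := by
    intro φ
    rw [hdiff, norm_smul_add_smul_sq_of_norm_eq_one hv]
    ring
  simp_rw [hnorm, integral_quadratic_sin_add_two_pi]
  field_simp
  ring

theorem expected_expansion_single_vector
    {d : ℕ} (α lam ω : ℝ) (hα0 : 0 < α) (hα1 : α < 1) (hlam : 0 < lam) (hω : 0 < ω)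
    (v : EuclideanSpace ℝ (Fin d)) (hv : ‖v‖ = 1)
    (x x' : EuclideanSpace ℝ (Fin d)) (h : EuclideanSpace ℝ (Fin d)) (hh : h = x - x')
    (δ : ℝ) (hδ : δ = ω * (inner ℝ h v : ℝ))
    (g : EuclideanSpace ℝ (Fin d) → ℝ → EuclideanSpace ℝ (Fin d))
    (hg : ∀ z φ, g z φ = (1 - α) • z + (lam * Real.cos (ω * (inner ℝ z v : ℝ) + φ)) • v) :
    (2 * π)⁻¹ * ∫ φ in (0:ℝ)..(2 * π), ‖g x φ - g x' φ‖ ^ 2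
      = (1 - α) ^ 2 * ‖h‖ ^ 2 + 2 * lam ^ 2 * Real.sin (δ / 2) ^ 2 :=
  expected_expansion_single_vector_general α lam ω v hv x x' h hh δ hδ g hg
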